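/- For real x with |x| < sqrt(π/2), the inequality |x − y| < sqrt(π/2) − sqrt(2/π)·x·y holds for a real number y if and only if |y| < sqrt(π/2). -/

import Mathlib

/-!
Write `a = √(π/2)`, so that `√(2/π) = 1/a` and, after multiplying by `a`, the inequality reads
`a |x - y| < a² - xy`. The identity `(a² - xy)² - a²(x - y)² = (a² - x²)(a² - y²)` shows that,
once `|x| < a`, squaring both sides turns it into `|y| < a`.
-/

open Real

theorem sq_sub_mul_sq_sub_sq_mul_sq {R : Type*} [CommRing R] (a x y : R) :
    (a ^ 2 - x * y) ^ 2 - a ^ 2 * (x - y) ^ 2 = (a ^ 2 - x ^ 2) * (a ^ 2 - y ^ 2) := by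
  ring

section

variable {K : Type*} [Field K] [LinearOrder K] [IsStrictOrderedRing K] {a x y : K}

theorem mul_abs_sub_lt_sq_sub_mul_iff (ha : 0 < a) (hx : |x| < a) :
    a * |x - y| < a ^ 2 - x * y ↔ |y| < a := by
  have hx2 : 0 < a ^ 2 - x ^ 2 := by
    rw [sub_pos, sq_lt_sq, abs_of_pos ha]
    exact hx
  have hsq : (a * |x - y|) ^ 2 < (a ^ 2 - x * y) ^ 2 ↔ |y| < a := by
    rw [← sub_pos, mul_pow, sq_abs, sq_sub_mul_sq_sub_sq_mul_sq, mul_pos_iff_of_pos_left hx2,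
      sub_pos, sq_lt_sq, abs_of_pos ha]
  have hlhs : 0 ≤ a * |x - y| := by positivity
  constructor
  · intro h
    exact hsq.1 ((sq_lt_sq₀ hlhs (hlhs.trans h.le)).2 h)
  · intro hy
    have hrhs : 0 < a ^ 2 - x * y := by
      have : |x| * |y| < a * a := mul_lt_mul'' hx hy (abs_nonneg x) (abs_nonneg y)
      nlinarith [abs_mul x y, le_abs_self (x * y)]
    exact (sq_lt_sq₀ hlhs hrhs.le).1 (hsq.2 hy)

theorem abs_sub_lt_sub_mul_div_iff (ha : 0 < a) (hx : |x| < a) :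
    |x - y| < a - x * y / a ↔ |y| < a := by
  rw [show a - x * y / a = (a ^ 2 - x * y) / a by field_simp, lt_div_iff₀' ha]
  exact mul_abs_sub_lt_sq_sub_mul_iff ha hx

end

theorem region_inner_square (x y : ℝ) (hx : |x| < Real.sqrt (π / 2)) :
    |x - y| < Real.sqrt (π / 2) - Real.sqrt (2 / π) * x * y ↔
      |y| < Real.sqrt (π / 2) := by
  have ha : 0 < √(π / 2) := Real.sqrt_pos.2 (by positivity)
  have hinv : √(2 / π) = (√(π / 2))⁻¹ := by rw [← Real.sqrt_inv, inv_div]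
  rw [hinv, inv_mul_eq_div, div_mul_eq_mul_div]
  exact abs_sub_lt_sub_mul_div_iff ha hx
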